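/- Let M be an MV-effect algebra. Define x ⊞ y = x ⊕ (x' ∧ y). Then (M, ⊞, ', 0) is an MV-algebra; i.e., ⊞ is a total, commutative, associative operation with unit 0, ¬¬x = x where ¬x = x', x ⊞ ¬0 = ¬0, and x ⊞ ¬(x ⊞ ¬y) = y ⊞ ¬(y ⊞ ¬x) for all x, y. -/

import Mathlib

/-! Everything is read off orthosupplements. Since `x' ∧ y ≤ x'`, the sum `x ⊞ y` is defined
and `(x ⊞ y)' = x' ⊖ (x' ∧ y)`; the MV identity turns this into `(y ∨ x') ⊖ y`, which equals
`y' ⊖ (y ∨ x')' = y' ⊖ (y' ∧ x) = (y ⊞ x)'`, so `⊞` is commutative, and the same computation gives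
`x ⊞ (x ⊞ y')' = x ⊕ ((x ∨ y) ⊖ x) = x ∨ y`, which is symmetric in `x` and `y`.
Associativity comes down to `(a ∧ y) ⊕ ((a ⊖ (a ∧ y)) ∧ z) = a ∧ (y ⊞ z)` for `a = x'`. It follows
from the distributivity of `⊕` over `∧` together with `a ∧ (z ⊕ w) ≤ z ⊕ (a ∧ w)`, where the MV
identity is used once more. -/

/-- An effect algebra: a partial algebra `(α; ⊕, 0, 1)`.  The partial operation is
encoded by a total function `add` together with a definedness predicate `D`. -/
structure EffectAlgebra (α : Type*) where
  D : α → α → Prop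
  add : α → α → α
  zero : α
  one : α
  comm_def : ∀ a b, D a b → D b a
  comm : ∀ a b, D a b → add a b = add b a
  assoc_def₁ : ∀ a b c, D a b → D (add a b) c → D b c
  assoc_def₂ : ∀ a b c, D a b → D (add a b) c → D a (add b c)
  assoc : ∀ a b c, D a b → D (add a b) c → add (add a b) c = add a (add b c)
  orth_exists : ∀ a, ∃! b, D a b ∧ add a b = one
  add_one : ∀ a, D a one → a = zero

namespace EffectAlgebra

variable {α : Type*}
open Classical

/-- The induced order: `a ≤ b` iff `∃ c, a ⊕ c = b`. -/
def le (E : EffectAlgebra α) (a b : α) : Prop := ∃ c, E.D a c ∧ E.add a c = b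

/-- The orthosupplement `a'`. -/
noncomputable def orth (E : EffectAlgebra α) (a : α) : α := (E.orth_exists a).choose

/-- Partial difference: `sub b a = b ⊖ a`, intended for `a ≤ b`. -/
noncomputable def sub (E : EffectAlgebra α) (b a : α) : α :=
  if h : ∃ c, E.D a c ∧ E.add a c = b then h.choose else E.zero

end EffectAlgebra

namespace EffectAlgebra

variable {α : Type*} {E : EffectAlgebra α} {a b c d : α}

theorem D.symm (h : E.D a b) : E.D b a := E.comm_def a b h

theorem D_orth (a : α) : E.D a (E.orth a) := (E.orth_exists a).choose_spec.1.1

theorem add_orth (a : α) : E.add a (E.orth a) = E.one := (E.orth_exists a).choose_spec.1.2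

theorem eq_orth_of_add_eq_one (h : E.D a b) (h2 : E.add a b = E.one) : b = E.orth a :=
  (E.orth_exists a).choose_spec.2 b ⟨h, h2⟩

@[simp]
theorem orth_orth (a : α) : E.orth (E.orth a) = a :=
  (eq_orth_of_add_eq_one (D_orth a).symm (by rw [E.comm _ _ (D_orth a).symm, add_orth])).symm

theorem orth_injective : Function.Injective E.orth := fun a b h => by
  rw [← orth_orth a, h, orth_orth]

theorem assoc' (hbc : E.D b c) (ha : E.D a (E.add b c)) :
    E.D a b ∧ E.D (E.add a b) c ∧ E.add a (E.add b c) = E.add (E.add a b) c := by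
  have hcba : E.D (E.add c b) a := by rw [← E.comm b c hbc]; exact ha.symm
  have hba : E.D b a := E.assoc_def₁ c b a hbc.symm hcba
  have hcab : E.D c (E.add a b) := E.comm b a hba ▸ E.assoc_def₂ c b a hbc.symm hcba
  exact ⟨hba.symm, hcab.symm, (E.assoc a b c hba.symm hcab.symm).symm⟩

theorem D_orth_add (h : E.D a b) : E.D b (E.orth (E.add a b)) :=
  E.assoc_def₁ a b _ h (D_orth _)

theorem add_orth_add (h : E.D a b) : E.add b (E.orth (E.add a b)) = E.orth a :=
  eq_orth_of_add_eq_one (E.assoc_def₂ a b _ h (D_orth _))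
    (by rw [← E.assoc a b _ h (D_orth _), add_orth])

theorem add_left_cancel (hab : E.D a b) (hac : E.D a c) (h : E.add a b = E.add a c) :
    b = c := by
  apply orth_injective
  rw [← add_orth_add hab.symm, ← add_orth_add hac.symm, E.comm b a hab.symm,
    E.comm c a hac.symm, h]

theorem orth_one : E.orth E.one = E.zero := E.add_one _ (D_orth E.one).symm

theorem orth_zero : E.orth E.zero = E.one := by rw [← orth_one, orth_orth]

theorem D_zero_and_add_zero (a : α) : E.D a E.zero ∧ E.add a E.zero = a := by
  rw [← orth_orth (E := E) a]
  have h1 := D_orth (E := E) (E.orth a)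
  have h2 : E.D (E.add (E.orth a) (E.orth (E.orth a))) E.zero := by
    rw [add_orth, ← orth_one]; exact D_orth E.one
  refine ⟨E.assoc_def₁ _ _ _ h1 h2, eq_orth_of_add_eq_one (E.assoc_def₂ _ _ _ h1 h2) ?_⟩
  rw [← E.assoc _ _ _ h1 h2, add_orth, ← orth_one, add_orth]

theorem D_zero (a : α) : E.D a E.zero := (D_zero_and_add_zero a).1

theorem add_zero (a : α) : E.add a E.zero = a := (D_zero_and_add_zero a).2

theorem eq_zero_of_add_eq_zero (h : E.D a b) (h2 : E.add a b = E.zero) : a = E.zero := by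
  have hb : b = E.zero :=
    E.add_one b (E.assoc_def₁ a b _ h (by rw [h2, ← orth_one]; exact (D_orth E.one).symm))
  rwa [hb, add_zero] at h2

theorem le_add_right (h : E.D a b) : E.le a (E.add a b) := ⟨b, h, rfl⟩

theorem le.refl (a : α) : E.le a a := ⟨E.zero, D_zero a, add_zero a⟩

theorem le.trans (h1 : E.le a b) (h2 : E.le b c) : E.le a c := by
  obtain ⟨d, hd, rfl⟩ := h1
  obtain ⟨e, he, rfl⟩ := h2
  exact ⟨E.add d e, E.assoc_def₂ a d e hd he, (E.assoc a d e hd he).symm⟩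

theorem le.antisymm (h1 : E.le a b) (h2 : E.le b a) : a = b := by
  obtain ⟨c, hc, rfl⟩ := h1
  obtain ⟨d, hd, hd2⟩ := h2
  have hcd : E.add c d = E.zero := add_left_cancel (E.assoc_def₂ a c d hc hd) (D_zero a)
    (by rw [← E.assoc a c d hc hd, hd2, add_zero])
  rw [eq_zero_of_add_eq_zero (E.assoc_def₁ a c d hc hd) hcd, add_zero]

theorem zero_le (a : α) : E.le E.zero a :=
  ⟨a, (D_zero a).symm, by rw [E.comm _ _ (D_zero a).symm, add_zero]⟩

theorem le_one (a : α) : E.le a E.one := ⟨E.orth a, D_orth a, add_orth a⟩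

theorem D_iff_le_orth : E.D a b ↔ E.le b (E.orth a) := by
  refine ⟨fun h => ⟨_, D_orth_add h, add_orth_add h⟩, fun ⟨c, hbc, h⟩ => ?_⟩
  exact (assoc' hbc (h ▸ D_orth a)).1

theorem orth_le_orth (h : E.le a b) : E.le (E.orth b) (E.orth a) := by
  obtain ⟨c, hc, rfl⟩ := h
  have hD := (D_orth_add hc).symm
  exact ⟨c, hD, by rw [E.comm _ _ hD, add_orth_add hc]⟩

theorem D_of_le (h : E.D a b) (hcb : E.le c b) : E.D a c :=
  D_iff_le_orth.2 (hcb.trans (D_iff_le_orth.1 h))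

theorem add_le_add_left (had : E.D a d) (h : E.le c d) : E.le (E.add a c) (E.add a d) := by
  obtain ⟨e, hce, rfl⟩ := h
  obtain ⟨-, hace, heq⟩ := assoc' hce had
  exact ⟨e, hace, heq.symm⟩

theorem add_le_add (hab : E.le a b) (hcd : E.le c d) (hbd : E.D b d) :
    E.le (E.add a c) (E.add b d) := by
  have had : E.D a d := (D_of_le hbd.symm hab).symm
  refine (add_le_add_left had hcd).trans ?_
  rw [E.comm a d had, E.comm b d hbd]
  exact add_le_add_left hbd.symm hab

theorem le_of_add_le_add_left (hab : E.D a b) (hac : E.D a c)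
    (h : E.le (E.add a b) (E.add a c)) : E.le b c := by
  obtain ⟨e, he, he2⟩ := h
  refine ⟨e, E.assoc_def₁ a b e hab he, add_left_cancel (E.assoc_def₂ a b e hab he) hac ?_⟩
  rw [← E.assoc a b e hab he, he2]

theorem sub_spec (h : E.le a b) : E.D a (E.sub b a) ∧ E.add a (E.sub b a) = b := by
  have h' : ∃ c, E.D a c ∧ E.add a c = b := h
  rw [sub, dif_pos h']
  exact h'.choose_spec

theorem D_sub (h : E.le a b) : E.D a (E.sub b a) := (sub_spec h).1

theorem add_sub (h : E.le a b) : E.add a (E.sub b a) = b := (sub_spec h).2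

theorem sub_eq_of_add_eq (hac : E.D a c) (h : E.add a c = b) : E.sub b a = c :=
  add_left_cancel (D_sub ⟨c, hac, h⟩) hac (by rw [add_sub ⟨c, hac, h⟩, h])

theorem sub_le (h : E.le a b) : E.le (E.sub b a) b :=
  ⟨a, (D_sub h).symm, by rw [E.comm _ _ (D_sub h).symm, add_sub h]⟩

theorem sub_sub (hca : E.le c a) (hd : E.le d (E.sub a c)) :
    E.sub (E.sub a c) d = E.sub a (E.add c d) := by
  have hc := D_sub hca
  rw [← add_sub hd] at hc
  obtain ⟨-, hcde, heq⟩ := assoc' (D_sub hd) hc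
  exact (sub_eq_of_add_eq hcde (by rw [← heq, add_sub hd, add_sub hca])).symm

theorem orth_add_eq_sub (h : E.D a b) : E.orth (E.add a b) = E.sub (E.orth a) b :=
  (sub_eq_of_add_eq (D_orth_add h) (add_orth_add h)).symm

theorem sub_orth_orth (h : E.le a b) : E.sub (E.orth a) (E.orth b) = E.sub b a := by
  obtain ⟨c, hc, rfl⟩ := h
  have hD := (D_orth_add hc).symm
  rw [sub_eq_of_add_eq hc rfl, sub_eq_of_add_eq hD (by rw [E.comm _ _ hD, add_orth_add hc])]

structure IsMVEffectAlgebra (E : EffectAlgebra α) (sup inf : α → α → α) : Prop where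
  le_sup_left (a b : α) : E.le a (sup a b)
  le_sup_right (a b : α) : E.le b (sup a b)
  sup_le {a b c : α} : E.le a c → E.le b c → E.le (sup a b) c
  inf_le_left (a b : α) : E.le (inf a b) a
  inf_le_right (a b : α) : E.le (inf a b) b
  le_inf {a b c : α} : E.le c a → E.le c b → E.le c (inf a b)
  sub_sup_eq (a b : α) : E.sub (sup a b) a = E.sub b (inf a b)

noncomputable def mvAdd (E : EffectAlgebra α) (inf : α → α → α) (x y : α) : α :=
  E.add x (inf (E.orth x) y)

namespace IsMVEffectAlgebra

variable {sup inf : α → α → α}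

theorem inf_comm (hM : IsMVEffectAlgebra E sup inf) (a b : α) : inf a b = inf b a :=
  (hM.le_inf (hM.inf_le_right a b) (hM.inf_le_left a b)).antisymm
    (hM.le_inf (hM.inf_le_right b a) (hM.inf_le_left b a))

theorem sup_comm (hM : IsMVEffectAlgebra E sup inf) (a b : α) : sup a b = sup b a :=
  (hM.sup_le (hM.le_sup_right b a) (hM.le_sup_left b a)).antisymm
    (hM.sup_le (hM.le_sup_right a b) (hM.le_sup_left a b))

theorem inf_eq_left (hM : IsMVEffectAlgebra E sup inf) {a b : α} (h : E.le a b) :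
    inf a b = a :=
  (hM.inf_le_left a b).antisymm (hM.le_inf (le.refl a) h)

theorem inf_eq_right (hM : IsMVEffectAlgebra E sup inf) {a b : α} (h : E.le b a) :
    inf a b = b :=
  (hM.inf_le_right a b).antisymm (hM.le_inf h (le.refl b))

theorem inf_le_inf_left (hM : IsMVEffectAlgebra E sup inf) (a : α) {b c : α} (h : E.le b c) :
    E.le (inf a b) (inf a c) :=
  hM.le_inf (hM.inf_le_left a b) ((hM.inf_le_right a b).trans h)

theorem inf_left_comm (hM : IsMVEffectAlgebra E sup inf) (a b c : α) :
    inf a (inf b c) = inf b (inf a c) := by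
  have key : ∀ a b, E.le (inf a (inf b c)) (inf b (inf a c)) := fun a b =>
    hM.le_inf ((hM.inf_le_right a _).trans (hM.inf_le_left b c))
      (hM.inf_le_inf_left a (hM.inf_le_right b c))
  exact (key a b).antisymm (key b a)

theorem inf_inf_of_le (hM : IsMVEffectAlgebra E sup inf) {a b : α} (h : E.le a b) (c : α) :
    inf a (inf b c) = inf a c := by
  rw [hM.inf_left_comm, hM.inf_eq_right ((hM.inf_le_left a c).trans h)]

theorem orth_sup (hM : IsMVEffectAlgebra E sup inf) (a b : α) :
    E.orth (sup a b) = inf (E.orth a) (E.orth b) := by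
  refine (hM.le_inf (orth_le_orth (hM.le_sup_left a b))
    (orth_le_orth (hM.le_sup_right a b))).antisymm ?_
  have ha := orth_le_orth (hM.inf_le_left (E.orth a) (E.orth b))
  have hb := orth_le_orth (hM.inf_le_right (E.orth a) (E.orth b))
  rw [orth_orth] at ha hb
  simpa using orth_le_orth (hM.sup_le ha hb)

theorem add_inf (hM : IsMVEffectAlgebra E sup inf) {a b c : α} (hab : E.D a b)
    (hac : E.D a c) : E.add a (inf b c) = inf (E.add a b) (E.add a c) := by
  refine (hM.le_inf (add_le_add_left hab (hM.inf_le_left b c))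
    (add_le_add_left hac (hM.inf_le_right b c))).antisymm ?_
  obtain ⟨e, he, he2⟩ := hM.le_inf (le_add_right hab) (le_add_right hac)
  have heb : E.le e b := le_of_add_le_add_left he hab (he2 ▸ hM.inf_le_left _ _)
  have hec : E.le e c := le_of_add_le_add_left he hac (he2 ▸ hM.inf_le_right _ _)
  exact he2 ▸ add_le_add_left (D_of_le hab (hM.inf_le_left b c)) (hM.le_inf heb hec)

theorem inf_add_le (hM : IsMVEffectAlgebra E sup inf) {z w : α} (hzw : E.D z w) (a : α) :
    E.le (inf a (E.add z w)) (E.add z (inf a w)) := by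
  set m := inf a (E.add z w)
  have hpm := hM.inf_le_right z m
  have hzs := hM.le_sup_left z m
  -- the MV identity: `m ⊖ (z ∧ m) = (z ∨ m) ⊖ z`, and `z ∨ m ≤ z ⊕ w`
  have hdw : E.le (E.sub m (inf z m)) w := by
    rw [← hM.sub_sup_eq]
    refine le_of_add_le_add_left (D_sub hzs) hzw ?_
    rw [add_sub hzs]
    exact hM.sup_le (le_add_right hzw) (hM.inf_le_right a _)
  have hda : E.le (E.sub m (inf z m)) (inf a w) :=
    hM.le_inf ((sub_le hpm).trans (hM.inf_le_left a _)) hdw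
  have h := add_le_add (hM.inf_le_left z m) hda (D_of_le hzw (hM.inf_le_right a w))
  rwa [add_sub hpm] at h

theorem D_inf_orth (hM : IsMVEffectAlgebra E sup inf) (x y : α) : E.D x (inf (E.orth x) y) :=
  D_iff_le_orth.2 (hM.inf_le_left _ _)

theorem orth_mvAdd (hM : IsMVEffectAlgebra E sup inf) (x y : α) :
    E.orth (mvAdd E inf x y) = E.sub (E.orth x) (inf (E.orth x) y) :=
  orth_add_eq_sub (hM.D_inf_orth x y)

theorem mvAdd_comm (hM : IsMVEffectAlgebra E sup inf) (x y : α) :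
    mvAdd E inf x y = mvAdd E inf y x := by
  apply orth_injective
  rw [hM.orth_mvAdd, hM.orth_mvAdd, hM.inf_comm (E.orth x) y, ← hM.sub_sup_eq y,
    ← sub_orth_orth (hM.le_sup_left y (E.orth x)), hM.orth_sup, orth_orth]

theorem mvAdd_zero (hM : IsMVEffectAlgebra E sup inf) (x : α) : mvAdd E inf x E.zero = x := by
  rw [mvAdd, hM.inf_eq_right (zero_le _), add_zero]

theorem mvAdd_one (hM : IsMVEffectAlgebra E sup inf) (x : α) : mvAdd E inf x E.one = E.one := by
  rw [mvAdd, hM.inf_eq_left (le_one _), add_orth]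

theorem mvAdd_orth_mvAdd_orth (hM : IsMVEffectAlgebra E sup inf) (x y : α) :
    mvAdd E inf x (E.orth (mvAdd E inf x (E.orth y))) = sup x y := by
  have hle := hM.le_sup_left x y
  rw [hM.orth_mvAdd, ← hM.orth_sup, sub_orth_orth hle, mvAdd,
    hM.inf_eq_right (D_iff_le_orth.1 (D_sub hle)), add_sub hle]

theorem mvAdd_mono (hM : IsMVEffectAlgebra E sup inf) (x : α) {y₁ y₂ : α} (h : E.le y₁ y₂) :
    E.le (mvAdd E inf x y₁) (mvAdd E inf x y₂) :=
  add_le_add_left (hM.D_inf_orth x y₂) (hM.inf_le_inf_left _ h)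

theorem inf_mvAdd_inf (hM : IsMVEffectAlgebra E sup inf) (a y z : α) :
    inf a (mvAdd E inf z (inf a y)) = inf a (mvAdd E inf z y) := by
  refine (hM.inf_le_inf_left a (hM.mvAdd_mono z (hM.inf_le_right a y))).antisymm
    (hM.le_inf (hM.inf_le_left _ _) ?_)
  have h := hM.inf_add_le (hM.D_inf_orth z y) a
  rwa [hM.inf_left_comm a (E.orth z) y] at h

theorem add_inf_sub_inf (hM : IsMVEffectAlgebra E sup inf) (a y z : α) :
    E.add (inf a y) (inf (E.sub a (inf a y)) z) = inf a (mvAdd E inf y z) := by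
  have hya := hM.inf_le_left a y
  rw [← hM.inf_inf_of_le (D_iff_le_orth.1 (D_sub hya)),
    hM.add_inf (D_sub hya) (hM.D_inf_orth _ z), add_sub hya]
  change inf a (mvAdd E inf (inf a y) z) = _
  rw [hM.mvAdd_comm, hM.inf_mvAdd_inf, hM.mvAdd_comm]

theorem mvAdd_assoc (hM : IsMVEffectAlgebra E sup inf) (x y z : α) :
    mvAdd E inf (mvAdd E inf x y) z = mvAdd E inf x (mvAdd E inf y z) := by
  apply orth_injective
  rw [hM.orth_mvAdd, hM.orth_mvAdd x y, sub_sub (hM.inf_le_left _ _) (hM.inf_le_left _ _),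
    hM.add_inf_sub_inf, hM.orth_mvAdd]

end IsMVEffectAlgebra

end EffectAlgebra

/-- in an MV-effect algebra, `x ⊞ y = x ⊕ (x' ∧ y)` makes `(M, ⊞, ', 0)`
an MV-algebra. -/
theorem stmt4 {α : Type*} (E : EffectAlgebra α) (sup inf : α → α → α)
    (hsup : ∀ a b : α, E.le a (sup a b) ∧ E.le b (sup a b) ∧
      ∀ c, E.le a c → E.le b c → E.le (sup a b) c)
    (hinf : ∀ a b : α, E.le (inf a b) a ∧ E.le (inf a b) b ∧
      ∀ c, E.le c a → E.le c b → E.le c (inf a b))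
    (hmv : ∀ a b : α, E.sub (sup a b) a = E.sub b (inf a b)) :
    let bp : α → α → α := fun x y => E.add x (inf (E.orth x) y)
    (∀ x y : α, E.D x (inf (E.orth x) y)) ∧
    (∀ x y : α, bp x y = bp y x) ∧
    (∀ x y z : α, bp (bp x y) z = bp x (bp y z)) ∧
    (∀ x : α, bp x E.zero = x) ∧
    (∀ x : α, E.orth (E.orth x) = x) ∧
    (∀ x : α, bp x (E.orth E.zero) = E.orth E.zero) ∧
    (∀ x y : α, bp x (E.orth (bp x (E.orth y))) = bp y (E.orth (bp y (E.orth x)))) := by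
  have hM : EffectAlgebra.IsMVEffectAlgebra E sup inf :=
    { le_sup_left := fun a b => (hsup a b).1
      le_sup_right := fun a b => (hsup a b).2.1
      sup_le := fun hac hbc => (hsup _ _).2.2 _ hac hbc
      inf_le_left := fun a b => (hinf a b).1
      inf_le_right := fun a b => (hinf a b).2.1
      le_inf := fun hca hcb => (hinf _ _).2.2 _ hca hcb
      sub_sup_eq := hmv }
  intro bp
  refine ⟨hM.D_inf_orth, hM.mvAdd_comm, hM.mvAdd_assoc, hM.mvAdd_zero,
    EffectAlgebra.orth_orth, fun x => ?_, fun x y => ?_⟩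
  · rw [EffectAlgebra.orth_zero]
    exact hM.mvAdd_one x
  · exact (hM.mvAdd_orth_mvAdd_orth x y).trans
      ((hM.sup_comm x y).trans (hM.mvAdd_orth_mvAdd_orth y x).symm)
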